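/- In the same noise-added model, the second corrected estimating function m_φ(θ, φ) = 1/(2φ) - (1/2)(y² - σ²) + (1/(2φ²)) θᵀ (W̃ᵀ W̃ - σ² J) θ is unbiased at the true parameters: E[m_φ(θ, φ)] = 0. -/

import Mathlib

open MeasureTheory ProbabilityTheory
open scoped ENNReal

lemma l2mul {Ω : Type*} [MeasurableSpace Ω] {μ : Measure Ω} {f g : Ω → ℝ}
    (hf : MemLp f 2 μ) (hg : MemLp g 2 μ) : Integrable (fun ω => f ω * g ω) μ := by
  have hpqr : (1 : ℝ≥0∞) / 1 = 1 / 2 + 1 / 2 := by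
    rw [ENNReal.div_add_div_same, one_div_one, one_add_one_eq_two,
      ENNReal.div_self two_ne_zero ENNReal.ofNat_ne_top]
  have h := memLp_one_iff_integrable.mp (hf.smul hg (r := 1))
  exact h.congr (ae_of_all _ fun ω => by simp [Pi.smul_apply, smul_eq_mul, mul_comm])

lemma Jsum {n : ℕ} (a : Fin (n+1) → ℝ) :
    ∑ k, ∑ l, a k * a l * (if k = l ∧ k ≠ 0 then (1:ℝ) else 0)
      = ∑ i : Fin n, (a i.succ) ^ 2 := by
  have h : ∀ k : Fin (n+1), ∑ l, a k * a l * (if k = l ∧ k ≠ 0 then (1:ℝ) else 0)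
      = if k ≠ 0 then (a k) ^ 2 else 0 := by
    intro k
    by_cases hk : k = 0
    · simp [hk]
    · simp only [hk, ne_eq, not_false_eq_true, and_true, if_true, mul_ite, mul_one, mul_zero]
      rw [Finset.sum_ite_eq]
      simp [pow_two]
  simp_rw [h]
  rw [Fin.sum_univ_succ]
  simp [Fin.succ_ne_zero]

lemma bigsum {n : ℕ} (σ : ℝ) (a w : Fin (n+1) → ℝ) :
    ∑ k, ∑ l, a k * (w k * w l - σ ^ 2 * (if k = l ∧ k ≠ 0 then (1:ℝ) else 0)) * a l
      = (∑ k, a k * w k) ^ 2 - σ ^ 2 * ∑ i : Fin n, (a i.succ) ^ 2 := by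
  have e : ∀ k l : Fin (n+1), a k * (w k * w l - σ ^ 2 * (if k = l ∧ k ≠ 0 then (1:ℝ) else 0)) * a l
      = (a k * w k) * (a l * w l) - σ ^ 2 * (a k * a l * (if k = l ∧ k ≠ 0 then (1:ℝ) else 0)) := by
    intro k l; ring
  simp_rw [e, Finset.sum_sub_distrib, ← Finset.mul_sum]
  rw [← Finset.sum_mul, Jsum]
  ring

lemma l2mulc {Ω : Type*} [MeasurableSpace Ω] {μ : Measure Ω} {p : ℝ≥0∞} {f : Ω → ℝ}
    (hf : MemLp f p μ) (c : ℝ) : MemLp (fun ω => f ω * c) p μ := by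
  simpa [mul_comm] using hf.const_mul c



open MeasureTheory ProbabilityTheory

noncomputable instance matrixMeasurableSpace {m n : Type*} [MeasurableSpace ℝ] :
    MeasurableSpace (Matrix m n ℝ) :=
  (inferInstance : MeasurableSpace (m → n → ℝ))

/-- In the noise-added model `y = y* + v`, `W = W* + U` with zero-mean noise
of variance `σ²` (and `Var(U) = σ²I`), the noise independent of the signal, the second
corrected estimating function
`m_φ(θ,φ) = 1/(2φ) - (1/2)(y² - σ²) + (1/(2φ²))θᵀ(W̃ᵀW̃ - σ²J)θ` is unbiased at the true
parameters `θ = φ(b₀, b̄ᵀ)ᵀ`, `φ = 1/τ²`, where `b̄ = Var(W*)⁻¹Cov(W*,y*)`,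
`b₀ = E(y*) - E(W*)b̄`, `τ² = Var(y* - b₀ - W*b̄)`. -/
theorem stmt13 {Ω : Type*} [m0 : MeasurableSpace Ω] (μ : Measure Ω)
    [IsProbabilityMeasure μ] {d : ℕ} (σ : ℝ)
    (ystar y v : Ω → ℝ) (Wstar W U : Ω → Matrix (Fin 1) (Fin d) ℝ)
    (hystar : Measurable ystar) (hWstar : Measurable Wstar)
    (hv : Measurable v) (hU : Measurable U)
    (hyL : MemLp ystar 2 μ) (hWL : ∀ i, MemLp (fun ω => Wstar ω 0 i) 2 μ)
    (hvL : MemLp v 2 μ) (hUL : ∀ i, MemLp (fun ω => U ω 0 i) 2 μ)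
    -- noise moments: E(v)=0, Var(v)=σ², E(U)=0, Var(U)=σ²I
    (hvmean : ∫ ω, v ω ∂μ = 0) (hvvar : ∫ ω, (v ω) ^ 2 ∂μ = σ ^ 2)
    (hUmean : ∀ i, ∫ ω, U ω 0 i ∂μ = 0)
    (hUvar : ∀ i j, ∫ ω, U ω 0 i * U ω 0 j ∂μ = if i = j then σ ^ 2 else 0)
    -- mutual independence of the noise components and independence from the signal:
    (hvU : IndepFun v U μ)
    (hindep : IndepFun (fun ω => (v ω, U ω)) (fun ω => (ystar ω, Wstar ω)) μ)
    (hy : ∀ ω, y ω = ystar ω + v ω)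
    (hW : ∀ ω i, W ω 0 i = Wstar ω 0 i + U ω 0 i)
    -- true parameters
    (varWstar : Matrix (Fin d) (Fin d) ℝ)
    (hvarWstar : varWstar = Matrix.of fun i j =>
      ∫ ω, (Wstar ω 0 i - ∫ ω', Wstar ω' 0 i ∂μ) *
        (Wstar ω 0 j - ∫ ω', Wstar ω' 0 j ∂μ) ∂μ)
    (hvarWinv : IsUnit varWstar.det)
    (b : Matrix (Fin d) (Fin 1) ℝ)
    (hb : b = varWstar⁻¹ * Matrix.of fun i (_ : Fin 1) =>
      ∫ ω, (Wstar ω 0 i - ∫ ω', Wstar ω' 0 i ∂μ) * (ystar ω - ∫ ω', ystar ω' ∂μ) ∂μ)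
    (b₀ : ℝ) (hb₀ : b₀ = (∫ ω, ystar ω ∂μ) - ∑ i, (∫ ω, Wstar ω 0 i ∂μ) * b i 0)
    (τsq : ℝ)
    (hτsq : τsq = ∫ ω, (ystar ω - b₀ - ∑ i, Wstar ω 0 i * b i 0
      - ∫ ω', (ystar ω' - b₀ - ∑ i, Wstar ω' 0 i * b i 0) ∂μ) ^ 2 ∂μ)
    (hτpos : 0 < τsq)
    (φ : ℝ) (hφ : φ = 1 / τsq)
    (θ : Fin (d + 1) → ℝ) (hθ : θ = fun k => φ * (Fin.cons b₀ (fun i => b i 0) : Fin (d + 1) → ℝ) k)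
    -- augmented covariate W̃ = (1, W) and J = diag(0, I_d)
    (wt : Ω → Fin (d + 1) → ℝ) (hwt : ∀ ω, wt ω = (Fin.cons 1 (fun i => W ω 0 i) : Fin (d + 1) → ℝ))
    (J : Matrix (Fin (d + 1)) (Fin (d + 1)) ℝ)
    (hJ : J = Matrix.of fun k l => if k = l ∧ k ≠ 0 then (1 : ℝ) else 0) :
    ∫ ω, (1 / (2 * φ) - (1 / 2) * ((y ω) ^ 2 - σ ^ 2)
        + (1 / (2 * φ ^ 2)) *
            ∑ k, ∑ l, θ k * (wt ω k * wt ω l - σ ^ 2 * J k l) * θ l) ∂μ = 0 := by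
  -- basic positivity
  have hτne : τsq ≠ 0 := ne_of_gt hτpos
  have hφpos : 0 < φ := by rw [hφ]; positivity
  have hφne : φ ≠ 0 := ne_of_gt hφpos
  -- abbreviations
  set my : ℝ := ∫ ω, ystar ω ∂μ with hmy
  set mW : Fin d → ℝ := fun i => ∫ ω, Wstar ω 0 i ∂μ with hmW
  set B : ℝ := ∑ i, (b i 0) ^ 2 with hB
  set S : Ω → ℝ := fun ω => b₀ + ∑ i, Wstar ω 0 i * b i 0 with hS
  set Z : Ω → ℝ := fun ω => ∑ i, U ω 0 i * b i 0 with hZ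
  set r : Ω → ℝ := fun ω => ystar ω - S ω with hr
  -- MemLp facts
  have hsumW : MemLp (fun ω => ∑ i, Wstar ω 0 i * b i 0) 2 μ := by
    have h := memLp_finset_sum' Finset.univ (fun i (_ : i ∈ Finset.univ) => l2mulc (hWL i) (b i 0))
    simpa [Finset.sum_fn] using h
  have hSL : MemLp S 2 μ := (memLp_const b₀).add hsumW
  have hZL : MemLp Z 2 μ := by
    have h := memLp_finset_sum' Finset.univ (fun i (_ : i ∈ Finset.univ) => l2mulc (hUL i) (b i 0))
    simpa [Finset.sum_fn] using h
  have hrL : MemLp r 2 μ := hyL.sub hSL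
  -- integrability basics
  have hyI : Integrable ystar μ := hyL.integrable one_le_two
  have hvI : Integrable v μ := hvL.integrable one_le_two
  have hWI : ∀ i, Integrable (fun ω => Wstar ω 0 i) μ := fun i => (hWL i).integrable one_le_two
  have hUI : ∀ i, Integrable (fun ω => U ω 0 i) μ := fun i => (hUL i).integrable one_le_two
  have hSI : Integrable S μ := hSL.integrable one_le_two
  have hZI : Integrable Z μ := hZL.integrable one_le_two
  have hrI : Integrable r μ := hrL.integrable one_le_two
  -- E r = 0
  have hES : ∫ ω, S ω ∂μ = b₀ + ∑ i, mW i * b i 0 := by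
    rw [hS, integral_add (integrable_const _) (integrable_finset_sum _ fun i _ => (hWI i).mul_const _)]
    rw [integral_const, integral_finset_sum _ fun i _ => (hWI i).mul_const _]
    simp [integral_mul_const, hmW]
  have hEr : ∫ ω, r ω ∂μ = 0 := by
    rw [hr, integral_sub hyI hSI, hES, hb₀]
    ring
  -- τsq = ∫ r²
  have hτr : τsq = ∫ ω, r ω ^ 2 ∂μ := by
    have h0 : (∫ ω', (ystar ω' - b₀ - ∑ i, Wstar ω' 0 i * b i 0) ∂μ) = 0 := by
      rw [← hEr]
      congr 1
      funext ω
      rw [hr, hS]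
      ring
    rw [hτsq, h0]
    congr 1
    funext ω
    rw [hr, hS]
    ring
  -- normal equations
  have hNE : ∀ i, ∑ j, varWstar i j * b j 0
      = ∫ ω, (Wstar ω 0 i - mW i) * (ystar ω - my) ∂μ := by
    intro i
    have hmat : varWstar * b = Matrix.of fun i (_ : Fin 1) =>
        ∫ ω, (Wstar ω 0 i - ∫ ω', Wstar ω' 0 i ∂μ) * (ystar ω - ∫ ω', ystar ω' ∂μ) ∂μ := by
      rw [hb, ← Matrix.mul_assoc, Matrix.mul_nonsing_inv _ hvarWinv, Matrix.one_mul]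
    have := congrFun (congrFun (congrArg (fun M => fun i j => M i j) hmat) i) 0
    simpa [Matrix.mul_apply, hmy, hmW] using this
  -- r pointwise centered form
  have hrpt : ∀ ω, r ω = (ystar ω - my) - ∑ j, (Wstar ω 0 j - mW j) * b j 0 := by
    intro ω
    simp only [hr, hS, hb₀, sub_mul, Finset.sum_sub_distrib]
    ring
  -- orthogonality
  have hcWL : ∀ i, MemLp (fun ω => Wstar ω 0 i - mW i) 2 μ :=
    fun i => (hWL i).sub (memLp_const _)
  have hcyL : MemLp (fun ω => ystar ω - my) 2 μ := hyL.sub (memLp_const _)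
  have horth : ∀ i, ∫ ω, (Wstar ω 0 i - mW i) * r ω ∂μ = 0 := by
    intro i
    have hpt : ∀ ω, (Wstar ω 0 i - mW i) * r ω
        = (Wstar ω 0 i - mW i) * (ystar ω - my)
          - ∑ j, ((Wstar ω 0 i - mW i) * (Wstar ω 0 j - mW j)) * b j 0 := by
      intro ω
      rw [hrpt ω, mul_sub, Finset.mul_sum]
      congr 1
      exact Finset.sum_congr rfl fun j _ => by ring
    calc ∫ ω, (Wstar ω 0 i - mW i) * r ω ∂μ
        = (∫ ω, (Wstar ω 0 i - mW i) * (ystar ω - my) ∂μ)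
          - ∑ j, (∫ ω, (Wstar ω 0 i - mW i) * (Wstar ω 0 j - mW j) ∂μ) * b j 0 := by
          simp_rw [hpt]
          rw [integral_sub (l2mul (hcWL i) hcyL)
            (integrable_finset_sum _ fun j _ => (l2mul (hcWL i) (hcWL j)).mul_const _)]
          rw [integral_finset_sum _ fun j _ => (l2mul (hcWL i) (hcWL j)).mul_const _]
          simp [integral_mul_const]
      _ = 0 := by
          rw [← hNE i]
          have : ∀ j, (∫ ω, (Wstar ω 0 i - mW i) * (Wstar ω 0 j - mW j) ∂μ) = varWstar i j := by
            intro j; rw [hvarWstar]; simp [hmW]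
          simp_rw [this]
          ring
  have hWr : ∀ i, ∫ ω, Wstar ω 0 i * r ω ∂μ = 0 := by
    intro i
    have hpt : ∀ ω, Wstar ω 0 i * r ω = (Wstar ω 0 i - mW i) * r ω + mW i * r ω := by
      intro ω; ring
    simp_rw [hpt]
    rw [integral_add (l2mul (hcWL i) hrL) (hrI.const_mul _), horth i,
      integral_const_mul, hEr]
    ring
  have hSr : ∫ ω, S ω * r ω ∂μ = 0 := by
    have hpt : ∀ ω, S ω * r ω = b₀ * r ω + ∑ i, (Wstar ω 0 i * r ω) * b i 0 := by
      intro ω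
      rw [hS, add_mul, Finset.sum_mul]
      congr 1
      exact Finset.sum_congr rfl fun i _ => by ring
    simp_rw [hpt]
    rw [integral_add (hrI.const_mul _)
      (integrable_finset_sum _ fun i _ => (l2mul (hWL i) hrL).mul_const _)]
    rw [integral_finset_sum _ fun i _ => (l2mul (hWL i) hrL).mul_const _]
    rw [integral_const_mul, hEr]
    simp [integral_mul_const, hWr]
  -- τsq = ∫ y*² - ∫ S²
  have hτ2 : τsq = (∫ ω, ystar ω ^ 2 ∂μ) - ∫ ω, S ω ^ 2 ∂μ := by
    have hpt : ∀ ω, r ω ^ 2 = ystar ω ^ 2 - S ω ^ 2 - 2 * (S ω * r ω) := by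
      intro ω; rw [hr]; ring
    rw [hτr]
    simp_rw [hpt]
    have i1 : Integrable (fun ω => ystar ω ^ 2 - S ω ^ 2) μ :=
      hyL.integrable_sq.sub hSL.integrable_sq
    have i2 : Integrable (fun ω => 2 * (S ω * r ω)) μ := (l2mul hSL hrL).const_mul 2
    rw [integral_sub i1 i2, integral_sub hyL.integrable_sq hSL.integrable_sq,
      integral_const_mul, hSr]
    ring
  -- independence consequences
  have hvy : IndepFun ystar v μ := (hindep.comp measurable_fst measurable_fst).symm
  have hmZ : Measurable (fun p : ℝ × Matrix (Fin 1) (Fin d) ℝ => ∑ i, p.2 0 i * b i 0) := by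
    apply Finset.measurable_sum
    intro i _
    exact ((measurable_pi_apply i).comp ((measurable_pi_apply 0).comp measurable_snd)).mul_const _
  have hmS : Measurable (fun p : ℝ × Matrix (Fin 1) (Fin d) ℝ => b₀ + ∑ i, p.2 0 i * b i 0) :=
    measurable_const.add hmZ
  have hSZ : IndepFun S Z μ := (hindep.comp hmZ hmS).symm
  -- E[(y*+v)^2]
  have hEyv : ∫ ω, ystar ω * v ω ∂μ = 0 := by
    have h := IndepFun.integral_mul_eq_mul_integral hvy hyL.aestronglyMeasurable hvL.aestronglyMeasurable
    rw [hvmean, mul_zero] at h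
    exact h
  have hEy2 : ∫ ω, (ystar ω + v ω) ^ 2 ∂μ = (∫ ω, ystar ω ^ 2 ∂μ) + σ ^ 2 := by
    have hpt : ∀ ω, (ystar ω + v ω) ^ 2 = ystar ω ^ 2 + 2 * (ystar ω * v ω) + v ω ^ 2 := by
      intro ω; ring
    simp_rw [hpt]
    have i1 : Integrable (fun ω => ystar ω ^ 2 + 2 * (ystar ω * v ω)) μ :=
      hyL.integrable_sq.add ((l2mul hyL hvL).const_mul 2)
    rw [integral_add i1 hvL.integrable_sq,
      integral_add hyL.integrable_sq ((l2mul hyL hvL).const_mul 2),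
      integral_const_mul, hEyv, hvvar]
    ring
  -- E Z = 0, E SZ = 0, E Z² = σ² B
  have hEZ : ∫ ω, Z ω ∂μ = 0 := by
    rw [hZ, integral_finset_sum _ fun i _ => (hUI i).mul_const _]
    simp [integral_mul_const, hUmean]
  have hESZ : ∫ ω, S ω * Z ω ∂μ = 0 := by
    have h := IndepFun.integral_mul_eq_mul_integral hSZ hSL.aestronglyMeasurable hZL.aestronglyMeasurable
    rw [hEZ, mul_zero] at h
    exact h
  have hEZ2 : ∫ ω, Z ω ^ 2 ∂μ = σ ^ 2 * B := by
    have hpt : ∀ ω, Z ω ^ 2 = ∑ i, ∑ j, (U ω 0 i * U ω 0 j) * (b i 0 * b j 0) := by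
      intro ω
      rw [hZ, pow_two, Finset.sum_mul_sum]
      exact Finset.sum_congr rfl fun i _ => Finset.sum_congr rfl fun j _ => by ring
    simp_rw [hpt]
    rw [integral_finset_sum _ fun i _ =>
      integrable_finset_sum _ fun j _ => (l2mul (hUL i) (hUL j)).mul_const _]
    have hinner : ∀ i, ∫ ω, ∑ j, (U ω 0 i * U ω 0 j) * (b i 0 * b j 0) ∂μ
        = σ ^ 2 * b i 0 ^ 2 := by
      intro i
      rw [integral_finset_sum _ fun j _ => (l2mul (hUL i) (hUL j)).mul_const _]
      have h2 : ∀ j, ∫ ω, (U ω 0 i * U ω 0 j) * (b i 0 * b j 0) ∂μ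
          = (if i = j then σ ^ 2 else 0) * (b i 0 * b j 0) := by
        intro j; rw [integral_mul_const, hUvar]
      simp_rw [h2, ite_mul, zero_mul]
      rw [Finset.sum_ite_eq]
      simp [pow_two, mul_assoc]
    simp_rw [hinner]
    rw [hB, Finset.mul_sum]
  -- E (S+Z)²
  have hET2 : ∫ ω, (S ω + Z ω) ^ 2 ∂μ = (∫ ω, S ω ^ 2 ∂μ) + σ ^ 2 * B := by
    have hpt : ∀ ω, (S ω + Z ω) ^ 2 = S ω ^ 2 + 2 * (S ω * Z ω) + Z ω ^ 2 := by
      intro ω; ring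
    simp_rw [hpt]
    have i1 : Integrable (fun ω => S ω ^ 2 + 2 * (S ω * Z ω)) μ :=
      hSL.integrable_sq.add ((l2mul hSL hZL).const_mul 2)
    rw [integral_add i1 hZL.integrable_sq,
      integral_add hSL.integrable_sq ((l2mul hSL hZL).const_mul 2),
      integral_const_mul, hESZ, hEZ2]
    ring
  -- pointwise reduction of the estimating function
  have hTW : ∀ ω, ∑ k, θ k * wt ω k = φ * (S ω + Z ω) := by
    intro ω
    rw [hθ, hwt ω, Fin.sum_univ_succ]
    simp only [Fin.cons_zero, Fin.cons_succ]
    have h1 : ∀ i, (φ * b i 0) * (Wstar ω 0 i + U ω 0 i)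
        = φ * (Wstar ω 0 i * b i 0) + φ * (U ω 0 i * b i 0) := fun i => by ring
    simp only [hW]
    simp_rw [h1, Finset.sum_add_distrib, ← Finset.mul_sum]
    rw [hS, hZ]
    ring
  have hθsq : ∑ i : Fin d, (θ i.succ) ^ 2 = φ ^ 2 * B := by
    rw [hθ]
    simp only [Fin.cons_succ]
    rw [hB, Finset.mul_sum]
    exact Finset.sum_congr rfl fun i _ => by ring
  have hmain : ∀ ω, (1 / (2 * φ) - (1 / 2) * ((y ω) ^ 2 - σ ^ 2)
        + (1 / (2 * φ ^ 2)) * ∑ k, ∑ l, θ k * (wt ω k * wt ω l - σ ^ 2 * J k l) * θ l)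
      = 1 / (2 * φ) - (1 / 2) * ((ystar ω + v ω) ^ 2 - σ ^ 2)
        + ((1 / 2) * (S ω + Z ω) ^ 2 - σ ^ 2 / 2 * B) := by
    intro ω
    have hsum : ∑ k, ∑ l, θ k * (wt ω k * wt ω l - σ ^ 2 * J k l) * θ l
        = (φ * (S ω + Z ω)) ^ 2 - σ ^ 2 * (φ ^ 2 * B) := by
      rw [hJ]
      simp only [Matrix.of_apply]
      rw [bigsum σ θ (wt ω), hTW ω, hθsq]
    rw [hy ω, hsum]
    have hc : (1 / (2 * φ ^ 2)) * ((φ * (S ω + Z ω)) ^ 2 - σ ^ 2 * (φ ^ 2 * B))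
        = (1 / 2) * (S ω + Z ω) ^ 2 - σ ^ 2 / 2 * B := by
      field_simp
    rw [hc]
  -- assemble
  simp_rw [hmain]
  have ip : Integrable (fun ω => (ystar ω + v ω) ^ 2) μ := (hyL.add hvL).integrable_sq
  have iq : Integrable (fun ω => (S ω + Z ω) ^ 2) μ := (hSL.add hZL).integrable_sq
  have ip' : Integrable (fun ω => (ystar ω + v ω) ^ 2 - σ ^ 2) μ := ip.sub (integrable_const _)
  have i1 : Integrable (fun ω => 1 / (2 * φ) - (1 / 2) * ((ystar ω + v ω) ^ 2 - σ ^ 2)) μ :=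
    (integrable_const _).sub (ip'.const_mul _)
  have i2 : Integrable (fun ω => (1 / 2) * (S ω + Z ω) ^ 2 - σ ^ 2 / 2 * B) μ :=
    (iq.const_mul _).sub (integrable_const _)
  rw [integral_add i1 i2, integral_sub (integrable_const _) (ip'.const_mul _),
    integral_sub (iq.const_mul _) (integrable_const _), integral_const_mul, integral_const_mul,
    integral_sub ip (integrable_const _), hEy2, hET2]
  simp only [integral_const, measure_univ, probReal_univ, ENNReal.toReal_one, one_smul, smul_eq_mul, one_mul]
  rw [hφ]
  field_simp
  linarith [hτ2]
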